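/- In the Ising-type model of the previous context and assuming additionally ‖x_v‖₂ ≤ M for all v, for each coordinate k define Q_k(y) = Σᵢ (yᵢ - tanh(β₀ fᵢ(y₋ᵢ) + θ₀^T xᵢ)) x_{i,k}. Then Σ_{k=1}^d E[Q_k(y)²] ≤ 4(1+B)M²(m-1)·d·n. -/

import Mathlib

open Matrix

noncomputable section

/-- The spin value of a Boolean configuration coordinate. -/
def sgn (b : Bool) : ℝ := if b then 1 else -1

/-- The ±1 configuration associated to a Boolean configuration. -/
def conf {n : ℕ} (s : Fin n → Bool) : Fin n → ℝ := fun i => sgn (s i)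

/-- The multilinear polynomial `f(σ) = Σ_e w_e Π_{v ∈ e} σ_v` of a weighted hypergraph. -/
def fpoly {n : ℕ} (w : Finset (Fin n) → ℝ) (σ : Fin n → ℝ) : ℝ :=
  ∑ e : Finset (Fin n), w e * ∏ v ∈ e, σ v

/-- The partial derivative `f_i = ∂f/∂y_i`. -/
def fder {n : ℕ} (w : Finset (Fin n) → ℝ) (i : Fin n) (σ : Fin n → ℝ) : ℝ :=
  ∑ e ∈ Finset.univ.filter (fun e : Finset (Fin n) => i ∈ e), w e * ∏ v ∈ e.erase i, σ v

/-- The (log-)weight `β f(σ) + Σ_v (θᵀ x_v) σ_v` of a configuration. -/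
def ham {n d : ℕ} (w : Finset (Fin n) → ℝ) (x : Fin n → Fin d → ℝ)
    (θ : Fin d → ℝ) (β : ℝ) (s : Fin n → Bool) : ℝ :=
  β * fpoly w (conf s) + ∑ v, (θ ⬝ᵥ x v) * conf s v

/-- Expectation of `g` under the Ising-type model `Pr[y = σ] ∝ exp(β f(σ) + Σ_v (θᵀx_v)σ_v)`. -/
def expec {n d : ℕ} (w : Finset (Fin n) → ℝ) (x : Fin n → Fin d → ℝ)
    (θ : Fin d → ℝ) (β : ℝ) (g : (Fin n → Bool) → ℝ) : ℝ :=
  (∑ s : Fin n → Bool, g s * Real.exp (ham w x θ β s)) /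
    (∑ s : Fin n → Bool, Real.exp (ham w x θ β s))

/-!
Write `rᵢ = yᵢ - tanh uᵢ` with local field `uᵢ = β₀ fᵢ(y₋ᵢ) + θ₀ᵀxᵢ`, so that `Q_k = Σᵢ rᵢ x_{ik}`
and `E[Q_k²] = Σᵢ x_{ik} E[rᵢ Q_k]`. Pairing each configuration with its flip at `i`, the
conditional law of `yᵢ` given `y₋ᵢ` gives `E[rᵢ q | y₋ᵢ] = (1 - tanh² uᵢ)/2 · (q(yⁱ⁺) - q(yⁱ⁻))`,
hence `|E[rᵢ q]| ≤ D/2` whenever flipping `yᵢ` moves `q` by at most `D`. Flipping `yᵢ` moves `rᵢ`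
by exactly `2` and, `tanh` being 1-Lipschitz, every other `rⱼ` by at most
`|β₀| |fⱼ(yⁱ⁺) - fⱼ(yⁱ⁻)|`; summed over `j` this is at most `2|β₀|(m-1)`, since each hyperedge
through `i` has at most `m - 1` other vertices and the degree of `i` is at most `1`. Therefore
`E[Q_k²] ≤ n M² (1 + |β₀|(m-1)) ≤ 4(1+B)M²(m-1)n`.
-/

def localField {n : ℕ} (w : Finset (Fin n) → ℝ) (β : ℝ) (h : Fin n → ℝ) (s : Fin n → Bool)
    (i : Fin n) : ℝ :=
  β * fder w i (conf s) + h i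

def spinResidual {n : ℕ} (w : Finset (Fin n) → ℝ) (β : ℝ) (h : Fin n → ℝ) (s : Fin n → Bool)
    (i : Fin n) : ℝ :=
  conf s i - Real.tanh (localField w β h s i)

open Real Finset Function

lemma one_sub_tanh_mul_exp_two_mul (u : ℝ) : (1 - tanh u) * exp (2 * u) = 1 + tanh u := by
  rw [tanh_eq, two_mul, exp_add, exp_neg]
  have := exp_pos u
  field_simp
  ring

lemma hasDerivAt_tanh (u : ℝ) : HasDerivAt tanh (1 / cosh u ^ 2) u := by
  have h := (hasDerivAt_sinh u).div (hasDerivAt_cosh u) (cosh_pos u).ne'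
  rw [show tanh = fun v => sinh v / cosh v from funext tanh_eq_sinh_div_cosh]
  refine h.congr_deriv ?_
  rw [div_eq_div_iff (by positivity) (by positivity)]
  linear_combination (cosh u ^ 2) * cosh_sq_sub_sinh_sq u

lemma abs_tanh_sub_tanh_le (a b : ℝ) : |tanh a - tanh b| ≤ |a - b| := by
  have hderiv : ∀ u, ‖deriv tanh u‖ ≤ 1 := fun u => by
    rw [(hasDerivAt_tanh u).deriv, norm_div, norm_one, norm_pow, Real.norm_eq_abs,
      abs_of_pos (cosh_pos u)]
    exact div_le_one_of_le₀ (one_le_pow₀ (one_le_cosh u)) (by positivity)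
  simpa using Convex.norm_image_sub_le_of_norm_deriv_le
    (fun u _ => (hasDerivAt_tanh u).differentiableAt) (fun u _ => hderiv u)
    convex_univ (Set.mem_univ b) (Set.mem_univ a)

-- For two configurations differing only at spin `i`, with energies `a`, `b`, local field `u` at
-- `i` and values `p`, `q` of a test function, both sides are the weight `exp a + exp b` of the
-- pair times the conditional expectation of `(yᵢ - tanh u) · test` given `y₋ᵢ`.
lemma tanh_pair_identity {a b u p q : ℝ} (h : a - b = 2 * u) :
    (1 - tanh u) * p * exp a + (-1 - tanh u) * q * exp b
      = (1 - tanh u ^ 2) / 2 * (exp a + exp b) * (p - q) := by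
  rw [show a = b + 2 * u by linarith, exp_add]
  linear_combination (exp b : ℝ) * (((1 - tanh u) * p + (1 + tanh u) * q) / 2) *
    one_sub_tanh_mul_exp_two_mul u

section BooleanCube

variable {ι : Type*} [Fintype ι] [DecidableEq ι]

lemma sum_update_true_add_update_false (G : (ι → Bool) → ℝ) (i : ι) :
    ∑ s, (G (update s i true) + G (update s i false)) = 2 * ∑ s, G s := by
  have hflip : Involutive fun s : ι → Bool => update s i (!s i) := fun s => by simp
  have hpair : ∀ s, G (update s i true) + G (update s i false) = G s + G (update s i (!s i)) :=
    fun s => by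
      have hs : update s i (s i) = s := update_eq_self i s
      cases h : s i <;> rw [h] at hs <;> simp [hs, add_comm]
  rw [sum_congr rfl fun s _ => hpair s, sum_add_distrib,
    Fintype.sum_equiv hflip.toPerm (fun s => G (update s i (!s i))) G fun _ => rfl, two_mul]

lemma abs_sum_sgn_sub_tanh_mul_exp_le (H u q : (ι → Bool) → ℝ) (i : ι) {D : ℝ}
    (hu : ∀ s, H (update s i true) - H (update s i false) = 2 * u s)
    (hq : ∀ s, |q (update s i true) - q (update s i false)| ≤ D) :
    |∑ s, (sgn (s i) - tanh (u s)) * q s * exp (H s)| ≤ D / 2 * ∑ s, exp (H s) := by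
  have hu_update : ∀ s b, u (update s i b) = u s := fun s b => by
    have := hu (update s i b)
    simp only [update_idem] at this
    linarith [hu s]
  have hpair : ∀ s, |(sgn true - tanh (u s)) * q (update s i true) * exp (H (update s i true))
      + (sgn false - tanh (u s)) * q (update s i false) * exp (H (update s i false))|
      ≤ D / 2 * (exp (H (update s i true)) + exp (H (update s i false))) := fun s => by
    have htanh : |1 - tanh (u s) ^ 2| ≤ 1 := by
      have := neg_one_lt_tanh (u s); have := tanh_lt_one (u s)
      rw [abs_le]; constructor <;> nlinarith
    simp only [sgn, if_true, Bool.false_eq_true, if_false]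
    rw [tanh_pair_identity (hu s), abs_mul, abs_mul, abs_div, abs_two,
      abs_of_pos (by positivity : 0 < exp (H (update s i true)) + exp (H (update s i false)))]
    calc |1 - tanh (u s) ^ 2| / 2 * (exp (H (update s i true)) + exp (H (update s i false)))
          * |q (update s i true) - q (update s i false)|
        ≤ 1 / 2 * (exp (H (update s i true)) + exp (H (update s i false))) * D := by
          gcongr
          exact hq s
      _ = _ := by ring
  rw [← mul_le_mul_iff_of_pos_left (two_pos : (0 : ℝ) < 2), ← abs_two, ← abs_mul, abs_two,
    ← sum_update_true_add_update_false _ i, mul_left_comm,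
    ← sum_update_true_add_update_false _ i, mul_sum]
  refine (abs_sum_le_sum_abs _ _).trans (sum_le_sum fun s _ => ?_)
  simpa only [update_self, hu_update] using hpair s

end BooleanCube

section SpinModel

variable {n : ℕ}

lemma abs_conf (s : Fin n → Bool) (v : Fin n) : |conf s v| = 1 := by
  unfold conf sgn; split_ifs <;> simp

lemma conf_update_self (s : Fin n → Bool) (i : Fin n) (b : Bool) :
    conf (update s i b) i = sgn b := by
  simp [conf]

lemma conf_update_of_ne (s : Fin n → Bool) {i v : Fin n} (b : Bool) (h : v ≠ i) :
    conf (update s i b) v = conf s v := by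
  simp [conf, update_of_ne h]

lemma prod_conf_update_of_notMem (s : Fin n → Bool) {i : Fin n} (b : Bool) {t : Finset (Fin n)}
    (hi : i ∉ t) : ∏ v ∈ t, conf (update s i b) v = ∏ v ∈ t, conf s v :=
  prod_congr rfl fun _ hv => conf_update_of_ne s b (ne_of_mem_of_not_mem hv hi)

lemma prod_conf_update_of_mem (s : Fin n → Bool) {i : Fin n} (b : Bool) {t : Finset (Fin n)}
    (hi : i ∈ t) : ∏ v ∈ t, conf (update s i b) v = sgn b * ∏ v ∈ t.erase i, conf s v := by
  rw [← mul_prod_erase t _ hi, conf_update_self,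
    prod_conf_update_of_notMem s b (notMem_erase i t)]

lemma abs_prod_conf_update_sub_le (s : Fin n → Bool) (i : Fin n) (t : Finset (Fin n)) :
    |∏ v ∈ t, conf (update s i true) v - ∏ v ∈ t, conf (update s i false) v|
      ≤ if i ∈ t then 2 else 0 := by
  split_ifs with hi
  · rw [prod_conf_update_of_mem s true hi, prod_conf_update_of_mem s false hi, ← sub_mul,
      abs_mul, abs_prod, prod_congr rfl fun v _ => abs_conf s v]
    norm_num [sgn]
  · simp [prod_conf_update_of_notMem s _ hi]

lemma fder_conf_update_self (w : Finset (Fin n) → ℝ) (s : Fin n → Bool) (i : Fin n) (b : Bool) :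
    fder w i (conf (update s i b)) = fder w i (conf s) := by
  unfold fder
  simp only [prod_conf_update_of_notMem s b (notMem_erase i _)]

lemma localField_update_self (w : Finset (Fin n) → ℝ) (β : ℝ) (h : Fin n → ℝ)
    (s : Fin n → Bool) (i : Fin n) (b : Bool) :
    localField w β h (update s i b) i = localField w β h s i := by
  simp only [localField, fder_conf_update_self]

lemma fpoly_update_true_sub_false (w : Finset (Fin n) → ℝ) (s : Fin n → Bool) (i : Fin n) :
    fpoly w (conf (update s i true)) - fpoly w (conf (update s i false))
      = 2 * fder w i (conf s) := by
  unfold fpoly fder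
  rw [← sum_sub_distrib, sum_filter, mul_sum]
  refine sum_congr rfl fun e _ => ?_
  split_ifs with hi
  · rw [prod_conf_update_of_mem s _ hi, prod_conf_update_of_mem s _ hi]
    norm_num [sgn]; ring
  · simp [prod_conf_update_of_notMem s _ hi]

lemma ham_update_true_sub_false {d : ℕ} (w : Finset (Fin n) → ℝ) (x : Fin n → Fin d → ℝ)
    (θ : Fin d → ℝ) (β : ℝ) (s : Fin n → Bool) (i : Fin n) :
    ham w x θ β (update s i true) - ham w x θ β (update s i false)
      = 2 * localField w β (fun v => θ ⬝ᵥ x v) s i := by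
  have hfield : ∑ v, (θ ⬝ᵥ x v) * conf (update s i true) v
      - ∑ v, (θ ⬝ᵥ x v) * conf (update s i false) v = 2 * (θ ⬝ᵥ x i) := by
    rw [← sum_sub_distrib, sum_eq_single i (fun v _ hv => by simp [conf_update_of_ne s _ hv])
      (by simp), conf_update_self, conf_update_self]
    norm_num [sgn]; ring
  unfold ham localField
  linear_combination β * fpoly_update_true_sub_false w s i + hfield

end SpinModel

section Hypergraph

variable {n : ℕ}

lemma abs_fder_update_sub_le (w : Finset (Fin n) → ℝ) (s : Fin n → Bool) {i j : Fin n}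
    (hji : j ≠ i) :
    |fder w j (conf (update s i true)) - fder w j (conf (update s i false))|
      ≤ ∑ e ∈ univ.filter (i ∈ ·), if j ∈ e then 2 * |w e| else 0 := by
  unfold fder
  rw [← sum_sub_distrib]
  calc _ ≤ ∑ e ∈ univ.filter (j ∈ ·), |w e| * (if i ∈ e.erase j then 2 else 0) := by
        refine (abs_sum_le_sum_abs _ _).trans (sum_le_sum fun e _ => ?_)
        rw [← mul_sub, abs_mul]
        exact mul_le_mul_of_nonneg_left (abs_prod_conf_update_sub_le s i _) (abs_nonneg _)
    _ = _ := by
        rw [sum_filter, sum_filter]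
        refine sum_congr rfl fun e _ => ?_
        by_cases hi : i ∈ e <;> by_cases hj : j ∈ e <;> simp [hi, hj, hji.symm, mul_comm]

lemma sum_abs_fder_update_sub_le {m : ℕ} (w : Finset (Fin n) → ℝ)
    (hcard : ∀ e, w e ≠ 0 → e.card ≤ m) (s : Fin n → Bool) (i : Fin n) :
    ∑ j ∈ univ.erase i,
        |fder w j (conf (update s i true)) - fder w j (conf (update s i false))|
      ≤ 2 * ((m : ℝ) - 1) * ∑ e ∈ univ.filter (i ∈ ·), |w e| := by
  have hedge : ∀ e ∈ univ.filter (i ∈ ·),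
      ∑ j ∈ univ.erase i, (if j ∈ e then 2 * |w e| else 0) ≤ 2 * ((m : ℝ) - 1) * |w e| := by
    intro e he
    have hi : i ∈ e := (mem_filter.1 he).2
    rw [sum_ite_mem, sum_const, nsmul_eq_mul,
      show univ.erase i ∩ e = e.erase i by ext; simp]
    by_cases hw : w e = 0
    · simp [hw]
    have hcard' : ((e.erase i).card : ℝ) + 1 ≤ m := by
      exact_mod_cast (card_erase_add_one hi).le.trans (hcard e hw)
    nlinarith [abs_nonneg (w e)]
  calc _ ≤ ∑ j ∈ univ.erase i, ∑ e ∈ univ.filter (i ∈ ·), if j ∈ e then 2 * |w e| else 0 :=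
        sum_le_sum fun j hj => abs_fder_update_sub_le w s (ne_of_mem_erase hj)
    _ ≤ _ := by
        rw [sum_comm, mul_sum]
        exact sum_le_sum hedge

end Hypergraph

section Residual

variable {n : ℕ} (w : Finset (Fin n) → ℝ) (β : ℝ) (h : Fin n → ℝ)

lemma spinResidual_update_self_sub (s : Fin n → Bool) (i : Fin n) :
    spinResidual w β h (update s i true) i - spinResidual w β h (update s i false) i = 2 := by
  simp only [spinResidual, localField_update_self, conf_update_self, sgn]
  norm_num

lemma abs_spinResidual_update_sub_le (s : Fin n → Bool) {i j : Fin n} (hji : j ≠ i) :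
    |spinResidual w β h (update s i true) j - spinResidual w β h (update s i false) j|
      ≤ |β| * |fder w j (conf (update s i true)) - fder w j (conf (update s i false))| := by
  simp only [spinResidual, conf_update_of_ne s _ hji, sub_sub_sub_cancel_left]
  calc _ ≤ |localField w β h (update s i false) j - localField w β h (update s i true) j| :=
        abs_tanh_sub_tanh_le _ _
    _ = _ := by
        rw [localField, localField, ← abs_mul, abs_sub_comm]
        ring_nf

lemma abs_sum_spinResidual_mul_update_sub_le {m : ℕ} (hm : 1 ≤ m)
    (hcard : ∀ e, w e ≠ 0 → e.card ≤ m) (c : Fin n → ℝ) {M : ℝ} (hc : ∀ j, |c j| ≤ M)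
    (s : Fin n → Bool) (i : Fin n) (hdeg : ∑ e ∈ univ.filter (i ∈ ·), |w e| ≤ 1) :
    |∑ j, spinResidual w β h (update s i true) j * c j
        - ∑ j, spinResidual w β h (update s i false) j * c j|
      ≤ 2 * M * (1 + |β| * ((m : ℝ) - 1)) := by
  have hM : 0 ≤ M := (abs_nonneg _).trans (hc i)
  have hm' : (0 : ℝ) ≤ (m : ℝ) - 1 := sub_nonneg.2 (by exact_mod_cast hm)
  have hdegree := sum_abs_fder_update_sub_le w hcard s i
  set Δ : Fin n → ℝ := fun j =>
    fder w j (conf (update s i true)) - fder w j (conf (update s i false))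
  have hself : |(spinResidual w β h (update s i true) i
      - spinResidual w β h (update s i false) i) * c i| ≤ 2 * M := by
    rw [spinResidual_update_self_sub, abs_mul, abs_two]
    exact mul_le_mul_of_nonneg_left (hc i) zero_le_two
  have hother : ∀ j ∈ univ.erase i, |(spinResidual w β h (update s i true) j
      - spinResidual w β h (update s i false) j) * c j| ≤ |β| * M * |Δ j| := by
    intro j hj
    rw [abs_mul]
    calc _ ≤ |β| * |Δ j| * M := mul_le_mul (abs_spinResidual_update_sub_le w β h s
            (ne_of_mem_erase hj)) (hc j) (abs_nonneg _) (by positivity)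
      _ = _ := by ring
  rw [← sum_sub_distrib, ← add_sum_erase _ _ (mem_univ i)]
  simp only [← sub_mul]
  calc _ ≤ 2 * M + ∑ j ∈ univ.erase i, |β| * M * |Δ j| :=
        (abs_add_le _ _).trans (add_le_add hself
          ((abs_sum_le_sum_abs _ _).trans (sum_le_sum hother)))
    _ ≤ 2 * M + |β| * M * (2 * ((m : ℝ) - 1) * 1) := by
        rw [← mul_sum]
        gcongr
        exact hdegree.trans (mul_le_mul_of_nonneg_left hdeg (by linarith))
    _ = _ := by ring

end Residual

section Expectation

variable {n d : ℕ} (w : Finset (Fin n) → ℝ) (x : Fin n → Fin d → ℝ) (θ : Fin d → ℝ) (β : ℝ)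

lemma expec_sum_mul {ι : Type*} (t : Finset ι) (c : ι → ℝ) (g : ι → (Fin n → Bool) → ℝ) :
    expec w x θ β (fun s => ∑ i ∈ t, c i * g i s) = ∑ i ∈ t, c i * expec w x θ β (g i) := by
  simp only [expec, sum_mul, sum_div, mul_sum, mul_assoc, mul_div_assoc]
  exact sum_comm

lemma abs_expec_spinResidual_mul_le (q : (Fin n → Bool) → ℝ) (i : Fin n) {D : ℝ}
    (hq : ∀ s, |q (update s i true) - q (update s i false)| ≤ D) :
    |expec w x θ β (fun s => spinResidual w β (fun v => θ ⬝ᵥ x v) s i * q s)| ≤ D / 2 := by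
  have hZ : 0 < ∑ s, exp (ham w x θ β s) := sum_pos (fun s _ => exp_pos _) univ_nonempty
  rw [expec, abs_div, abs_of_pos hZ, div_le_iff₀ hZ]
  exact abs_sum_sgn_sub_tanh_mul_exp_le _ _ q i (ham_update_true_sub_false w x θ β · i) hq

lemma expec_sq_sum_spinResidual_mul_le {m : ℕ} (hm : 1 ≤ m) (hcard : ∀ e, w e ≠ 0 → e.card ≤ m)
    (hdeg : ∀ i, ∑ e ∈ univ.filter (i ∈ ·), |w e| ≤ 1) (c : Fin n → ℝ) {M : ℝ}
    (hc : ∀ j, |c j| ≤ M) :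
    expec w x θ β (fun s => (∑ i, spinResidual w β (fun v => θ ⬝ᵥ x v) s i * c i) ^ 2)
      ≤ n * M ^ 2 * (1 + |β| * ((m : ℝ) - 1)) := by
  set r := spinResidual w β (fun v => θ ⬝ᵥ x v)
  set Q : (Fin n → Bool) → ℝ := fun s => ∑ i, r s i * c i
  have hQ : (fun s => Q s ^ 2) = fun s => ∑ i, c i * (r s i * Q s) := funext fun s => by
    rw [sq, sum_mul]
    exact sum_congr rfl fun i _ => by ring
  rw [hQ, expec_sum_mul]
  calc _ ≤ ∑ i : Fin n, M * (M * (1 + |β| * ((m : ℝ) - 1))) := sum_le_sum fun i _ => by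
        have hr := abs_expec_spinResidual_mul_le w x θ β Q i
          (abs_sum_spinResidual_mul_update_sub_le w β _ hm hcard c hc · i (hdeg i))
        refine (le_abs_self _).trans ?_
        rw [abs_mul]
        exact mul_le_mul (hc i) (hr.trans_eq (by ring)) (abs_nonneg _)
          ((abs_nonneg _).trans (hc i))
    _ = _ := by rw [sum_const, card_univ, Fintype.card_fin, nsmul_eq_mul]; ring

end Expectation

lemma abs_le_of_sqrt_sum_sq_le {ι : Type*} [Fintype ι] {v : ι → ℝ} {M : ℝ}
    (hv : √(∑ k, v k ^ 2) ≤ M) (k : ι) : |v k| ≤ M :=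
  (abs_le_sqrt (single_le_sum (fun j _ => sq_nonneg (v j)) (mem_univ k))).trans hv

theorem stmt13 {n d m : ℕ} (hm : 2 ≤ m) (w : Finset (Fin n) → ℝ)
    (x : Fin n → Fin d → ℝ) (θ₀ : Fin d → ℝ) (β₀ B M : ℝ)
    (hcard : ∀ e : Finset (Fin n), w e ≠ 0 → 2 ≤ e.card ∧ e.card ≤ m)
    (hdeg : ∀ i : Fin n,
      ∑ e ∈ Finset.univ.filter (fun e : Finset (Fin n) => i ∈ e), |w e| ≤ 1)
    (hβ : |β₀| ≤ B)
    (hx : ∀ i, Real.sqrt (∑ k, x i k ^ 2) ≤ M)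
    (Q : Fin d → (Fin n → Bool) → ℝ)
    (hQ : ∀ k s, Q k s = ∑ i,
      (conf s i - Real.tanh (β₀ * fder w i (conf s) + θ₀ ⬝ᵥ x i)) * x i k) :
    ∑ k : Fin d, expec w x θ₀ β₀ (fun s => (Q k s) ^ 2) ≤
      4 * (1 + B) * M ^ 2 * ((m : ℝ) - 1) * d * n := by
  have hm' : (2 : ℝ) ≤ m := by exact_mod_cast hm
  have hmoment : ∀ k, expec w x θ₀ β₀ (fun s => Q k s ^ 2)
      ≤ n * M ^ 2 * (1 + |β₀| * ((m : ℝ) - 1)) := fun k => by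
    have hQk : (fun s => Q k s ^ 2)
        = fun s => (∑ i, spinResidual w β₀ (fun v => θ₀ ⬝ᵥ x v) s i * x i k) ^ 2 :=
      funext fun s => by rw [hQ]; rfl
    rw [hQk]
    exact expec_sq_sum_spinResidual_mul_le w x θ₀ β₀ (by omega) (fun e he => (hcard e he).2)
      hdeg (x · k) fun j => abs_le_of_sqrt_sum_sq_le (hx j) k
  have hconst : 1 + |β₀| * ((m : ℝ) - 1) ≤ 4 * (1 + B) * ((m : ℝ) - 1) := by
    nlinarith [abs_nonneg β₀, hβ]
  calc _ ≤ ∑ _k : Fin d, n * M ^ 2 * (1 + |β₀| * ((m : ℝ) - 1)) :=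
        sum_le_sum fun k _ => hmoment k
    _ = d * n * M ^ 2 * (1 + |β₀| * ((m : ℝ) - 1)) := by
        rw [sum_const, card_univ, Fintype.card_fin, nsmul_eq_mul]; ring
    _ ≤ d * n * M ^ 2 * (4 * (1 + B) * ((m : ℝ) - 1)) := by gcongr
    _ = _ := by ring
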